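/- Sub-Gaussian bound on accumulated quantization noise with zooming: Let P be an n×n symmetric doubly stochastic matrix with σ₂(P) < 1, let s : ℕ → (0,∞) be a zooming sequence, and let {ξ_j(r) : j ∈ {1,…,n}, r = 0,…,t} be independent zero-mean real random variables such that s(r)·ξ_j(r) is sub-Gaussian with variance proxy s²(r). Define S_i(t+1) = ∑_{r=1}^{t+1} ∑_{j=1}^n ( 1/n − [P^{t−r+2}]_{ij} )·s(r−1)·ξ_j(r−1). Then S_i(t+1) is zero-mean and sub-Gaussian with variance proxy at most ∑_{r=1}^{t+1} s²(r−1)·σ₂(P)^{2(t−r+2)}. -/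

import Mathlib

/-!
`S_i(t+1)` is a linear combination of the independent, centred variables `s(k) ξ_j(k)` with
weights `w_{jk} = 1/n - [P^(t+1-k)]_{ij}`. Variance proxies of independent centred summands add,
so `S_i(t+1)` has proxy `∑_k s(k)² ∑_j w_{jk}²`. By symmetry and unit row sums, `-w_{·k}` is
`P^(t+1-k)` applied to the centred vector `e_i - 𝟏/n` of norm at most `1`; since `P` maps centred
vectors to centred vectors and shrinks them by the factor `σ₂(P)`, `∑_j w_{jk}² ≤ σ₂(P)^(2(t+1-k))`.
-/

open Finset MeasureTheory ProbabilityTheory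

/-- A real random variable `Y` is sub-Gaussian with variance proxy `v` if
`E[exp(l (Y − E Y))] ≤ exp(l² v / 2)` for every `l : ℝ`. -/
def IsSubGaussian {Ω : Type*} [MeasurableSpace Ω] (μ : Measure Ω) (Y : Ω → ℝ) (v : ℝ) :
    Prop :=
  ∀ l : ℝ, ∫ ω, Real.exp (l * (Y ω - ∫ ω', Y ω' ∂μ)) ∂μ ≤ Real.exp (l ^ 2 * v / 2)

/-- An `n × n` real matrix is doubly stochastic if all its entries are nonnegative and
every row sum and every column sum equals 1. -/
def DoublyStochastic {n : ℕ} (P : Matrix (Fin n) (Fin n) ℝ) : Prop :=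
  (∀ i j, 0 ≤ P i j) ∧ (∀ i, ∑ j, P i j = 1) ∧ (∀ j, ∑ i, P i j = 1)

/-- The ℓ₂-norm on `ℝⁿ`. -/
noncomputable def l2norm {n : ℕ} (v : Fin n → ℝ) : ℝ := Real.sqrt (∑ i, v i ^ 2)

/-- The second-largest singular value of a symmetric doubly stochastic matrix, characterized
as the ℓ₂-operator norm of the matrix restricted to the subspace of mean-zero vectors
(the orthogonal complement of the all-ones vector, which is the leading singular vector). -/
noncomputable def sigma2 {n : ℕ} (P : Matrix (Fin n) (Fin n) ℝ) : ℝ :=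
  sSup {r : ℝ | ∃ v : Fin n → ℝ, (∑ i, v i) = 0 ∧ l2norm v ≤ 1 ∧ r = l2norm (P.mulVec v)}

section DoublyStochastic

open Matrix

lemma l2norm_eq_norm {n : ℕ} (v : Fin n → ℝ) :
    l2norm v = ‖(WithLp.toLp 2 v : EuclideanSpace ℝ (Fin n))‖ := by
  simp [l2norm, EuclideanSpace.norm_eq]

lemma l2norm_nonneg {n : ℕ} (v : Fin n → ℝ) : 0 ≤ l2norm v :=
  Real.sqrt_nonneg _

lemma l2norm_sq {n : ℕ} (v : Fin n → ℝ) : l2norm v ^ 2 = ∑ i, v i ^ 2 :=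
  Real.sq_sqrt (sum_nonneg fun _ _ => sq_nonneg _)

lemma l2norm_smul {n : ℕ} (c : ℝ) (v : Fin n → ℝ) : l2norm (c • v) = |c| * l2norm v := by
  simp only [l2norm_eq_norm, WithLp.toLp_smul, norm_smul, Real.norm_eq_abs]

lemma l2norm_eq_zero {n : ℕ} {v : Fin n → ℝ} : l2norm v = 0 ↔ v = 0 := by
  simp [l2norm_eq_norm]

lemma DoublyStochastic.mem_doublyStochastic {n : ℕ} {P : Matrix (Fin n) (Fin n) ℝ}
    (hP : DoublyStochastic P) : P ∈ doublyStochastic ℝ (Fin n) :=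
  mem_doublyStochastic_iff_sum.2 hP

lemma l2norm_mulVec_le_of_mem_doublyStochastic {n : ℕ} {M : Matrix (Fin n) (Fin n) ℝ}
    (hM : M ∈ doublyStochastic ℝ (Fin n)) (v : Fin n → ℝ) : l2norm (M *ᵥ v) ≤ l2norm v := by
  refine Real.sqrt_le_sqrt ?_
  -- Jensen for `x ↦ x²` on each row, a probability vector; then the column sums are `1`.
  have hrow (k : Fin n) : (M *ᵥ v) k ^ 2 ≤ ∑ j, M k j * v j ^ 2 :=
    even_two.convexOn_pow.map_sum_le (fun j _ => nonneg_of_mem_doublyStochastic hM)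
      (sum_row_of_mem_doublyStochastic hM k) (fun _ _ => Set.mem_univ _)
  calc ∑ k, (M *ᵥ v) k ^ 2 ≤ ∑ k, ∑ j, M k j * v j ^ 2 := sum_le_sum fun k _ => hrow k
    _ = ∑ j, v j ^ 2 := by
      rw [sum_comm]
      simp [← sum_mul, sum_col_of_mem_doublyStochastic hM]

lemma sigma2_nonneg {n : ℕ} (P : Matrix (Fin n) (Fin n) ℝ) : 0 ≤ sigma2 P :=
  Real.sSup_nonneg fun _ ⟨_, _, _, hr⟩ => hr ▸ l2norm_nonneg _

lemma DoublyStochastic.l2norm_mulVec_le_sigma2_mul {n : ℕ} {P : Matrix (Fin n) (Fin n) ℝ}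
    (hP : DoublyStochastic P) {v : Fin n → ℝ} (hv : ∑ i, v i = 0) :
    l2norm (P *ᵥ v) ≤ sigma2 P * l2norm v := by
  have hbdd : BddAbove {r : ℝ | ∃ v : Fin n → ℝ,
      (∑ i, v i) = 0 ∧ l2norm v ≤ 1 ∧ r = l2norm (P *ᵥ v)} := by
    refine ⟨1, fun r ⟨u, _, hu, hr⟩ => hr ▸ ?_⟩
    exact (l2norm_mulVec_le_of_mem_doublyStochastic hP.mem_doublyStochastic u).trans hu
  rcases eq_or_ne v 0 with rfl | hv0
  · simp [l2norm]
  have hpos : 0 < l2norm v := (l2norm_nonneg v).lt_of_ne' (l2norm_eq_zero.not.2 hv0)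
  set a := (l2norm v)⁻¹
  have hunit : l2norm (a • v) = 1 := by
    rw [l2norm_smul, abs_of_pos (inv_pos.2 hpos), inv_mul_cancel₀ hpos.ne']
  have hle : l2norm (P *ᵥ (a • v)) ≤ sigma2 P :=
    le_csSup hbdd ⟨a • v, by simp [← mul_sum, hv], hunit.le, rfl⟩
  rw [mulVec_smul, l2norm_smul, abs_of_pos (inv_pos.2 hpos), inv_mul_le_iff₀ hpos] at hle
  linarith

lemma DoublyStochastic.l2norm_pow_mulVec_le {n : ℕ} {P : Matrix (Fin n) (Fin n) ℝ}
    (hP : DoublyStochastic P) (m : ℕ) {v : Fin n → ℝ} (hv : ∑ i, v i = 0) :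
    l2norm ((P ^ m) *ᵥ v) ≤ sigma2 P ^ m * l2norm v := by
  induction m with
  | zero => simp
  | succ m ih =>
    have hsum : ∑ k, ((P ^ m) *ᵥ v) k = 0 := by
      rw [sum_mulVec_of_mem_doublyStochastic (pow_mem hP.mem_doublyStochastic m), hv]
    calc l2norm ((P ^ (m + 1)) *ᵥ v) = l2norm (P *ᵥ ((P ^ m) *ᵥ v)) := by
          rw [pow_succ', mulVec_mulVec]
      _ ≤ sigma2 P * (sigma2 P ^ m * l2norm v) :=
          (hP.l2norm_mulVec_le_sigma2_mul hsum).trans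
            (mul_le_mul_of_nonneg_left ih (sigma2_nonneg P))
      _ = sigma2 P ^ (m + 1) * l2norm v := by ring

lemma DoublyStochastic.sum_sq_inv_sub_pow_apply_le {n : ℕ} {P : Matrix (Fin n) (Fin n) ℝ}
    (hP : DoublyStochastic P) (hsym : P.IsSymm) (m : ℕ) (i : Fin n) :
    ∑ j, ((n : ℝ)⁻¹ - (P ^ m) i j) ^ 2 ≤ sigma2 P ^ (2 * m) := by
  have hn : (n : ℝ) ≠ 0 := Nat.cast_ne_zero.2 i.pos.ne'
  set v : Fin n → ℝ := Pi.single i 1 - fun _ => (n : ℝ)⁻¹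
  have hv : ∑ k, v k = 0 := by simp [v, sum_sub_distrib, mul_inv_cancel₀ hn]
  have hv1 : l2norm v ≤ 1 := by
    have hsq : ∑ k, v k ^ 2 = v i := by
      calc ∑ k, v k ^ 2 = ∑ k, v k * (Pi.single i 1 : Fin n → ℝ) k - (n : ℝ)⁻¹ * ∑ k, v k := by
            rw [mul_sum, ← sum_sub_distrib]
            exact sum_congr rfl fun k _ => by simp only [v, Pi.sub_apply]; ring
        _ = v i := by simp [hv, Pi.single_apply]
    rw [← Real.sqrt_one, l2norm, hsq]
    exact Real.sqrt_le_sqrt (by simp [v])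
  have hPv (j : Fin n) : ((P ^ m) *ᵥ v) j = (P ^ m) i j - (n : ℝ)⁻¹ := by
    have hrow := mulVec_one_of_mem_doublyStochastic (pow_mem hP.mem_doublyStochastic m)
    have hconst : (fun _ : Fin n => (n : ℝ)⁻¹) = (n : ℝ)⁻¹ • 1 := by ext; simp
    rw [mulVec_sub, hconst, mulVec_smul, hrow, mulVec_single_one]
    simp [(hsym.pow m).apply j i]
  calc ∑ j, ((n : ℝ)⁻¹ - (P ^ m) i j) ^ 2 = l2norm ((P ^ m) *ᵥ v) ^ 2 := by
        simp only [l2norm_sq, hPv]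
        exact sum_congr rfl fun j _ => by ring
    _ ≤ (sigma2 P ^ m * l2norm v) ^ 2 :=
        pow_le_pow_left₀ (l2norm_nonneg _) (hP.l2norm_pow_mulVec_le m hv) 2
    _ ≤ sigma2 P ^ (2 * m) := by
        rw [mul_comm 2 m, pow_mul, mul_pow]
        exact mul_le_of_le_one_right (by positivity)
          (pow_le_one₀ (l2norm_nonneg v) hv1)

end DoublyStochastic

section SubGaussian

variable {Ω : Type*} [MeasurableSpace Ω] {μ : Measure Ω}

lemma IsSubGaussian.mono {Y : Ω → ℝ} {v w : ℝ} (h : IsSubGaussian μ Y v) (hvw : v ≤ w) :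
    IsSubGaussian μ Y w := fun l =>
  (h l).trans <| Real.exp_le_exp.2 <| by gcongr

lemma IsSubGaussian.const_mul {Y : Ω → ℝ} {v : ℝ} (h : IsSubGaussian μ Y v) (c : ℝ) :
    IsSubGaussian μ (fun ω => c * Y ω) (c ^ 2 * v) := fun l => by
  have := h (l * c)
  simp only [integral_const_mul, ← mul_sub, ← mul_assoc]
  convert this using 3
  ring

lemma isSubGaussian_iff_mgf_le {Y : Ω → ℝ} {v : ℝ} (hY : ∫ ω, Y ω ∂μ = 0) :
    IsSubGaussian μ Y v ↔ ∀ l, mgf Y μ l ≤ Real.exp (l ^ 2 * v / 2) := by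
  simp [IsSubGaussian, mgf, hY]

end SubGaussian

namespace ProbabilityTheory

variable {Ω ι : Type*} [MeasurableSpace Ω] {μ : Measure Ω} [IsProbabilityMeasure μ]

/-- The law of `(X, Y)` is a product, so by Fubini `x ↦ x + y` is integrable for some `y`. -/
lemma IndepFun.integrable_left_of_integrable_add {X Y : Ω → ℝ} (hXY : IndepFun X Y μ)
    (hX : Measurable X) (hY : Measurable Y) (h : Integrable (fun ω => X ω + Y ω) μ) :
    Integrable X μ := by
  have hmap : μ.map (fun ω => (X ω, Y ω)) = (μ.map X).prod (μ.map Y) :=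
    (indepFun_iff_map_prod_eq_prod_map_map hX.aemeasurable hY.aemeasurable).1 hXY
  have hsum : Integrable (fun q : ℝ × ℝ => q.1 + q.2) ((μ.map X).prod (μ.map Y)) := by
    rwa [← hmap, integrable_map_measure (by fun_prop) (by fun_prop)]
  have : IsProbabilityMeasure (μ.map Y) := Measure.isProbabilityMeasure_map hY.aemeasurable
  obtain ⟨y, hy⟩ := hsum.prod_left_ae.exists
  have hid : Integrable (fun x : ℝ => x) (μ.map X) := by
    simpa [Pi.sub_def] using hy.sub (integrable_const y)
  exact (integrable_map_measure aestronglyMeasurable_id hX.aemeasurable).1 hid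

lemma iIndepFun.integrable_of_integrable_sum {X : ι → Ω → ℝ} (hX : iIndepFun X μ)
    (hmeas : ∀ i, Measurable (X i)) {s : Finset ι}
    (h : Integrable (fun ω => ∑ i ∈ s, X i ω) μ) : ∀ i ∈ s, Integrable (X i) μ := by
  classical
  induction s using Finset.induction_on with
  | empty => simp
  | insert a s ha ih =>
    simp only [Finset.sum_insert ha] at h
    have hindep : IndepFun (X a) (fun ω => ∑ i ∈ s, X i ω) μ := by
      simpa [Finset.sum_fn] using (hX.indepFun_finsetSum_of_notMem hmeas ha).symm
    have ha_int : Integrable (X a) μ :=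
      hindep.integrable_left_of_integrable_add (hmeas a)
        (Finset.measurable_sum s fun i _ => hmeas i) h
    have hs_int : Integrable (fun ω => ∑ i ∈ s, X i ω) μ := by
      simpa [Pi.sub_def] using h.sub ha_int
    simpa [ha_int] using ih hs_int

/-- Without integrability of the sum this holds by the convention `∫ f ∂μ = 0`. -/
lemma iIndepFun.integral_sum_eq_zero {X : ι → Ω → ℝ} (hX : iIndepFun X μ)
    (hmeas : ∀ i, Measurable (X i)) (s : Finset ι) (hmean : ∀ i ∈ s, ∫ ω, X i ω ∂μ = 0) :
    ∫ ω, ∑ i ∈ s, X i ω ∂μ = 0 := by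
  by_cases h : Integrable (fun ω => ∑ i ∈ s, X i ω) μ
  · rw [integral_finsetSum s (hX.integrable_of_integrable_sum hmeas h)]
    exact Finset.sum_eq_zero hmean
  · exact integral_undef h

lemma iIndepFun.isSubGaussian_sum {X : ι → Ω → ℝ} (hX : iIndepFun X μ)
    (hmeas : ∀ i, Measurable (X i)) (s : Finset ι) (hmean : ∀ i ∈ s, ∫ ω, X i ω ∂μ = 0)
    {v : ι → ℝ} (hv : ∀ i ∈ s, IsSubGaussian μ (X i) (v i)) :
    IsSubGaussian μ (fun ω => ∑ i ∈ s, X i ω) (∑ i ∈ s, v i) := by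
  rw [isSubGaussian_iff_mgf_le (hX.integral_sum_eq_zero hmeas s hmean)]
  intro l
  calc mgf (fun ω => ∑ i ∈ s, X i ω) μ l = ∏ i ∈ s, mgf (X i) μ l := by
        rw [← hX.mgf_sum hmeas s, Finset.sum_fn]
    _ ≤ ∏ i ∈ s, Real.exp (l ^ 2 * v i / 2) :=
        Finset.prod_le_prod (fun _ _ => mgf_nonneg)
          fun i hi => (isSubGaussian_iff_mgf_le (hmean i hi)).1 (hv i hi) l
    _ = Real.exp (l ^ 2 * (∑ i ∈ s, v i) / 2) := by
        rw [← Real.exp_sum, Finset.mul_sum, Finset.sum_div]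

end ProbabilityTheory

lemma sum_Icc_one_eq_sum_fin {M : Type*} [AddCommMonoid M] (t : ℕ) (f : ℕ → M) :
    ∑ r ∈ Icc 1 (t + 1), f r = ∑ k : Fin (t + 1), f (k + 1) := by
  rw [← Ico_add_one_right_eq_Icc, sum_Ico_eq_sum_range,
    Fin.sum_univ_eq_sum_range (fun k => f (k + 1))]
  simp [add_comm]

theorem accumulated_quantization_noise_subgaussian_general
    {n : ℕ}
    (P : Matrix (Fin n) (Fin n) ℝ)
    (hPds : DoublyStochastic P) (hPsym : P.IsSymm)
    (s : ℕ → ℝ)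
    {Ω : Type*} [MeasurableSpace Ω] (μ : Measure Ω) [IsProbabilityMeasure μ]
    (t : ℕ)
    (ξ : Fin n → ℕ → Ω → ℝ)
    (hmeas : ∀ j r, Measurable (ξ j r))
    (hindep : iIndepFun
      (fun p : {q : Fin n × ℕ // q.2 ≤ t} => ξ p.1.1 p.1.2) μ)
    (hmean : ∀ j r, r ≤ t → ∫ ω, ξ j r ω ∂μ = 0)
    (hsg : ∀ j r, r ≤ t → IsSubGaussian μ (fun ω => s r * ξ j r ω) (s r ^ 2))
    (i : Fin n) :
    (∫ ω, (∑ r ∈ Icc 1 (t + 1), ∑ j,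
        ((n : ℝ)⁻¹ - (P ^ (t + 2 - r)) i j) * (s (r - 1) * ξ j (r - 1) ω)) ∂μ) = 0 ∧
    IsSubGaussian μ
      (fun ω => ∑ r ∈ Icc 1 (t + 1), ∑ j,
        ((n : ℝ)⁻¹ - (P ^ (t + 2 - r)) i j) * (s (r - 1) * ξ j (r - 1) ω))
      (∑ r ∈ Icc 1 (t + 1), s (r - 1) ^ 2 * sigma2 P ^ (2 * (t + 2 - r))) := by
  let w : Fin n × Fin (t + 1) → ℝ := fun q => (n : ℝ)⁻¹ - (P ^ (t + 1 - q.2)) i q.1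
  let Y : Fin n × Fin (t + 1) → Ω → ℝ := fun q ω => w q * (s q.2 * ξ q.1 q.2 ω)
  have hS : (fun ω => ∑ r ∈ Icc 1 (t + 1), ∑ j,
      ((n : ℝ)⁻¹ - (P ^ (t + 2 - r)) i j) * (s (r - 1) * ξ j (r - 1) ω)) =
      fun ω => ∑ q, Y q ω := by
    ext ω
    rw [sum_Icc_one_eq_sum_fin, Fintype.sum_prod_type_right]
    simp [Y, w]
  have hYmeas (q) : Measurable (Y q) := by fun_prop
  have hYindep : iIndepFun Y μ :=
    (hindep.precomp (g := fun q => ⟨(q.1, q.2), q.2.is_le⟩) fun q q' h => by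
      ext <;> simp_all).comp (fun q x => w q * (s q.2 * x)) fun q => by fun_prop
  have hYmean (q) : ∫ ω, Y q ω ∂μ = 0 := by
    simp [Y, integral_const_mul, hmean q.1 q.2 q.2.is_le]
  have hYsg (q) : IsSubGaussian μ (Y q) (w q ^ 2 * s q.2 ^ 2) :=
    (hsg q.1 q.2 q.2.is_le).const_mul (w q)
  have hvar : ∑ q, w q ^ 2 * s q.2 ^ 2 ≤
      ∑ r ∈ Icc 1 (t + 1), s (r - 1) ^ 2 * sigma2 P ^ (2 * (t + 2 - r)) := by
    rw [sum_Icc_one_eq_sum_fin, Fintype.sum_prod_type_right]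
    refine sum_le_sum fun k _ => ?_
    rw [Nat.add_sub_cancel, show t + 2 - (k + 1) = t + 1 - k by omega]
    simp only [w, mul_comm _ (s k ^ 2), ← mul_sum]
    exact mul_le_mul_of_nonneg_left (hPds.sum_sq_inv_sub_pow_apply_le hPsym (t + 1 - k) i)
      (sq_nonneg _)
  rw [hS]
  exact ⟨hYindep.integral_sum_eq_zero hYmeas _ fun q _ => hYmean q,
    (hYindep.isSubGaussian_sum hYmeas _ (fun q _ => hYmean q) fun q _ => hYsg q).mono hvar⟩

/-- **Sub-Gaussian bound on accumulated quantization noise with zooming.**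
The accumulated quantization noise
`S_i(t+1) = ∑_{r=1}^{t+1} ∑_j (1/n − [P^{t−r+2}]_{ij}) s(r−1) ξ_j(r−1)` is zero-mean and
sub-Gaussian with variance proxy at most `∑_{r=1}^{t+1} s²(r−1) σ₂(P)^{2(t−r+2)}`. -/
theorem accumulated_quantization_noise_subgaussian
    {n : ℕ} (hn : 0 < n)
    (P : Matrix (Fin n) (Fin n) ℝ)
    (hPds : DoublyStochastic P) (hPsym : P.IsSymm) (hPσ : sigma2 P < 1)
    (s : ℕ → ℝ) (hs : ∀ r, 0 < s r)
    {Ω : Type*} [MeasurableSpace Ω] (μ : Measure Ω) [IsProbabilityMeasure μ]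
    (t : ℕ)
    (ξ : Fin n → ℕ → Ω → ℝ)
    (hmeas : ∀ j r, Measurable (ξ j r))
    (hindep : iIndepFun
      (fun p : {q : Fin n × ℕ // q.2 ≤ t} => ξ p.1.1 p.1.2) μ)
    (hmean : ∀ j r, r ≤ t → ∫ ω, ξ j r ω ∂μ = 0)
    (hsg : ∀ j r, r ≤ t → IsSubGaussian μ (fun ω => s r * ξ j r ω) (s r ^ 2))
    (i : Fin n) :
    (∫ ω, (∑ r ∈ Icc 1 (t + 1), ∑ j,
        ((n : ℝ)⁻¹ - (P ^ (t + 2 - r)) i j) * (s (r - 1) * ξ j (r - 1) ω)) ∂μ) = 0 ∧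
    IsSubGaussian μ
      (fun ω => ∑ r ∈ Icc 1 (t + 1), ∑ j,
        ((n : ℝ)⁻¹ - (P ^ (t + 2 - r)) i j) * (s (r - 1) * ξ j (r - 1) ω))
      (∑ r ∈ Icc 1 (t + 1), s (r - 1) ^ 2 * sigma2 P ^ (2 * (t + 2 - r))) :=
  accumulated_quantization_noise_subgaussian_general P hPds hPsym s μ t ξ hmeas hindep hmean hsg i
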